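/- In a many-to-one matching market, if some stable matching assigns a university u a set T of students with |T| < L, then every stable matching assigns u exactly the set T (and hence T = S(u)). -/

import Mathlib

/-!
Let `P` be the set of students who strictly prefer `m₁` to `m₂`, and let some `s ∈ P` be matched
to `v` by `m₁`. Stability of `m₂` makes `v` full in `m₂` with all its `m₂`-students ranked above
`s`; stability of `m₁` then puts each of them that `v` does not get in `m₁` into `P`. Counting
gives `|P ∩ m₁⁻¹ v| + L ≤ |m₁⁻¹ v| + |P ∩ m₂⁻¹ v|`, hence `|P ∩ m₁⁻¹ v| ≤ |P ∩ m₂⁻¹ v|` for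
every `v`. Summed over `v`, the left sides give `|P|` (every student of `P` is matched by `m₁`)
and the right sides at most `|P|`, so the two counts agree at every university. At a university
`u` underfilled in `m₁` this forces both counts to vanish, while a student of `u` in `m₂` who
prefers `m₂` would make `u` full in `m₁`. Hence `m₂⁻¹ u ⊆ m₁⁻¹ u`, so `u` is underfilled in `m₂`
as well and the inclusion reverses.
-/

/-- The set of students assigned to university `u` by the matching `m`. -/
def assignedSet {S U : Type*} (m : S → Option U) (u : U) : Set S := {s | m s = some u}

/-- `m` is a matching for capacity `L`: each university gets at most `L` students
(each student automatically gets at most one university, as `m` is a function). -/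
def IsMatching {S U : Type*} (L : ℕ) (m : S → Option U) : Prop :=
  ∀ u : U, (assignedSet m u).ncard ≤ L

/-- `(s, u)` is a blocking pair for the matching `m`: the student `s` strictly prefers
`u` to her current assignment, and `u` either is underfilled and prefers `s` to being
unmatched, or strictly prefers `s` to one of its assigned students. -/
def IsBlockingPair {S U : Type*} (L : ℕ)
    (sPref : S → Option U → Option U → Prop) (uPref : U → Option S → Option S → Prop)
    (m : S → Option U) (s : S) (u : U) : Prop :=
  sPref s (some u) (m s) ∧
    (((assignedSet m u).ncard < L ∧ uPref u (some s) none) ∨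
      ∃ t : S, m t = some u ∧ uPref u (some s) (some t))

/-- `m` is a stable matching: it is a matching for capacity `L`, every matched
student strictly prefers her university to `⊥`, every university strictly prefers
each of its assigned students to `⊥`, and there is no blocking pair. -/
def IsStableMatching {S U : Type*} (L : ℕ)
    (sPref : S → Option U → Option U → Prop) (uPref : U → Option S → Option S → Prop)
    (m : S → Option U) : Prop :=
  IsMatching L m ∧
    (∀ s u, m s = some u → sPref s (some u) none) ∧
    (∀ s u, m s = some u → uPref u (some s) none) ∧
    ∀ s u, ¬ IsBlockingPair L sPref uPref m s u

/-- `stablePartners L sPref uPref u` is the set `S(u)` of stable partners of university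
`u`: the students assigned to `u` in at least one stable matching. -/
def stablePartners {S U : Type*} (L : ℕ)
    (sPref : S → Option U → Option U → Prop) (uPref : U → Option S → Option S → Prop)
    (u : U) : Set S :=
  {s | ∃ m : S → Option U, IsStableMatching L sPref uPref m ∧ m s = some u}

open scoped Function

section

variable {S U : Type*} {L : ℕ} {sPref : S → Option U → Option U → Prop}
  {uPref : U → Option S → Option S → Prop} {m m₁ m₂ : S → Option U}

def strictlyPrefers (sPref : S → Option U → Option U → Prop) (m₁ m₂ : S → Option U) : Set S :=
  {s | sPref s (m₁ s) (m₂ s)}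

theorem pairwise_disjoint_assignedSet (m : S → Option U) :
    Pairwise (Disjoint on assignedSet m) :=
  fun _ _ hvw => Set.disjoint_left.2 fun _ hv hw => hvw (Option.some_injective _ (hv.symm.trans hw))

theorem sum_ncard_inter_assignedSet [Finite S] [Fintype U] (P : Set S) (m : S → Option U) :
    ∑ v, (P ∩ assignedSet m v).ncard = (P ∩ {s | m s ≠ none}).ncard := by
  rw [← finsum_eq_sum_of_fintype, ← Set.ncard_iUnion_of_finite (fun _ => Set.toFinite _)
    fun _ _ hvw => ((pairwise_disjoint_assignedSet m hvw).mono_left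
      Set.inter_subset_right).mono_right Set.inter_subset_right]
  congr 1
  ext s
  simp [assignedSet, Option.ne_none_iff_exists', ← Set.inter_iUnion]

namespace IsStableMatching

theorem ne_none_of_sPref [∀ s, Std.Asymm (sPref s)] (h : IsStableMatching L sPref uPref m)
    {s : S} {o : Option U} (hs : sPref s o (m s)) : o ≠ none := by
  rintro rfl
  cases hms : m s with
  | none => rw [hms] at hs; exact asymm hs hs
  | some w => rw [hms] at hs; exact asymm hs (h.2.1 s w hms)

theorem ncard_assignedSet_eq_of_sPref (h : IsStableMatching L sPref uPref m) {s : S} {v : U}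
    (hvs : uPref v (some s) none) (hsv : sPref s (some v) (m s)) :
    (assignedSet m v).ncard = L :=
  le_antisymm (h.1 v) (not_lt.1 fun hlt => h.2.2.2 s v ⟨hsv, .inl ⟨hlt, hvs⟩⟩)

theorem uPref_of_sPref [∀ s, Std.Asymm (sPref s)] [∀ v, Std.Trichotomous (uPref v)]
    (h : IsStableMatching L sPref uPref m) {s t : S} {v : U} (hsv : sPref s (some v) (m s))
    (ht : m t = some v) : uPref v (some t) (some s) := by
  rcases trichotomous (r := uPref v) (some t) (some s) with hts | hts | hst
  · exact hts
  · cases hts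
    rw [ht] at hsv
    exact (asymm hsv hsv).elim
  · exact (h.2.2.2 s v ⟨hsv, .inr ⟨t, ht, hst⟩⟩).elim

theorem sPref_of_uPref [∀ s, Std.Trichotomous (sPref s)] (h : IsStableMatching L sPref uPref m)
    {s t : S} {v : U} (hs : m s = some v) (hts : uPref v (some t) (some s)) (ht : m t ≠ some v) :
    sPref t (m t) (some v) := by
  rcases trichotomous (r := sPref t) (m t) (some v) with htv | htv | hvt
  · exact htv
  · exact (ht htv).elim
  · exact (h.2.2.2 t v ⟨hvt, .inr ⟨s, hs, hts⟩⟩).elim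

end IsStableMatching

variable [∀ s, Std.Asymm (sPref s)] [∀ s, Std.Trichotomous (sPref s)]
  [∀ v, Std.Trichotomous (uPref v)] [Finite S]

theorem ncard_inter_assignedSet_add_le
    (h₁ : IsStableMatching L sPref uPref m₁) (h₂ : IsStableMatching L sPref uPref m₂) {v : U}
    (hne : (strictlyPrefers sPref m₁ m₂ ∩ assignedSet m₁ v).Nonempty) :
    (strictlyPrefers sPref m₁ m₂ ∩ assignedSet m₁ v).ncard + L ≤
      (assignedSet m₁ v).ncard + (strictlyPrefers sPref m₁ m₂ ∩ assignedSet m₂ v).ncard := by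
  set P := strictlyPrefers sPref m₁ m₂
  obtain ⟨s, hsP, hs₁⟩ := hne
  have hsv : sPref s (some v) (m₂ s) := hs₁ ▸ hsP
  have hfull := h₂.ncard_assignedSet_eq_of_sPref (h₁.2.2.1 s v hs₁) hsv
  have hleft : P ∩ assignedSet m₁ v ⊆ assignedSet m₁ v \ assignedSet m₂ v := by
    rintro t ⟨htP, ht₁⟩
    refine ⟨ht₁, fun ht₂ => ?_⟩
    have htP : sPref t (m₁ t) (m₂ t) := htP
    rw [Eq.trans ht₁ ht₂.symm] at htP
    exact asymm htP htP
  have hright : assignedSet m₂ v \ assignedSet m₁ v ⊆ P ∩ assignedSet m₂ v := by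
    rintro t ⟨ht₂, ht₁⟩
    have ht₂ : m₂ t = some v := ht₂
    refine ⟨?_, ht₂⟩
    show sPref t (m₁ t) (m₂ t)
    rw [ht₂]
    exact h₁.sPref_of_uPref hs₁ (h₂.uPref_of_sPref hsv ht₂) ht₁
  have := Set.ncard_le_ncard hleft
  have := Set.ncard_le_ncard hright
  have := Set.ncard_inter_add_ncard_sdiff_eq_ncard (assignedSet m₁ v) (assignedSet m₂ v)
  have := Set.ncard_inter_add_ncard_sdiff_eq_ncard (assignedSet m₂ v) (assignedSet m₁ v)
  rw [Set.inter_comm] at this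
  omega

theorem ncard_inter_assignedSet_eq [Fintype U]
    (h₁ : IsStableMatching L sPref uPref m₁) (h₂ : IsStableMatching L sPref uPref m₂) (v : U) :
    (strictlyPrefers sPref m₁ m₂ ∩ assignedSet m₁ v).ncard =
      (strictlyPrefers sPref m₁ m₂ ∩ assignedSet m₂ v).ncard := by
  set P := strictlyPrefers sPref m₁ m₂
  have hle : ∀ w, (P ∩ assignedSet m₁ w).ncard ≤ (P ∩ assignedSet m₂ w).ncard := by
    intro w
    rcases (P ∩ assignedSet m₁ w).eq_empty_or_nonempty with hempty | hne
    · simp [hempty]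
    · have hadd : (P ∩ assignedSet m₁ w).ncard + L ≤
          (assignedSet m₁ w).ncard + (P ∩ assignedSet m₂ w).ncard :=
        ncard_inter_assignedSet_add_le h₁ h₂ hne
      have := h₁.1 w
      omega
  have hmatched : P ∩ {s | m₁ s ≠ none} = P :=
    Set.inter_eq_left.2 fun s hs => h₂.ne_none_of_sPref hs
  have hsum : ∑ w, (P ∩ assignedSet m₂ w).ncard ≤ ∑ w, (P ∩ assignedSet m₁ w).ncard := by
    rw [sum_ncard_inter_assignedSet, sum_ncard_inter_assignedSet, hmatched]
    exact Set.ncard_le_ncard Set.inter_subset_left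
  exact (Finset.sum_eq_sum_iff_of_le fun w _ => hle w).1
    (le_antisymm (Finset.sum_le_sum fun w _ => hle w) hsum) v (Finset.mem_univ v)

theorem assignedSet_subset_of_ncard_lt [Fintype U]
    (h₁ : IsStableMatching L sPref uPref m₁) (h₂ : IsStableMatching L sPref uPref m₂) {u : U}
    (hlt : (assignedSet m₁ u).ncard < L) : assignedSet m₂ u ⊆ assignedSet m₁ u := by
  have hzero : (strictlyPrefers sPref m₁ m₂ ∩ assignedSet m₁ u).ncard = 0 := by
    by_contra hne
    have hadd := ncard_inter_assignedSet_add_le h₁ h₂ (Set.nonempty_of_ncard_ne_zero hne)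
    rw [ncard_inter_assignedSet_eq h₁ h₂ u] at hadd
    omega
  rw [ncard_inter_assignedSet_eq h₁ h₂, Set.ncard_eq_zero] at hzero
  intro s hs₂
  rcases trichotomous (r := sPref s) (m₁ s) (m₂ s) with h₁₂ | heq | h₂₁
  · exact (hzero.subset ⟨h₁₂, hs₂⟩).elim
  · exact heq.trans hs₂
  · have hs₂ : m₂ s = some u := hs₂
    rw [hs₂] at h₂₁
    exact (hlt.ne (h₁.ncard_assignedSet_eq_of_sPref (h₂.2.2.1 s u hs₂) h₂₁)).elim

end

theorem assigned_eq_of_underfilled_general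
    {S U : Type*} [Fintype S] [Fintype U]
    (L : ℕ)
    (sPref : S → Option U → Option U → Prop) (uPref : U → Option S → Option S → Prop)
    (hs : ∀ s, IsStrictTotalOrder (Option U) (sPref s))
    (hu : ∀ u, IsStrictTotalOrder (Option S) (uPref u))
    (u : U) (m : S → Option U) (hm : IsStableMatching L sPref uPref m)
    (hcard : (assignedSet m u).ncard < L) :
    (∀ m' : S → Option U, IsStableMatching L sPref uPref m' →
        assignedSet m' u = assignedSet m u) ∧
      assignedSet m u = stablePartners L sPref uPref u := by
  have hsub : ∀ m', IsStableMatching L sPref uPref m' → assignedSet m' u ⊆ assignedSet m u :=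
    fun m' hm' => assignedSet_subset_of_ncard_lt hm hm' hcard
  have main : ∀ m', IsStableMatching L sPref uPref m' → assignedSet m' u = assignedSet m u :=
    fun m' hm' => (hsub m' hm').antisymm <| assignedSet_subset_of_ncard_lt hm' hm <|
      (Set.ncard_le_ncard (hsub m' hm')).trans_lt hcard
  refine ⟨main, Set.Subset.antisymm (fun s hsu => ⟨m, hm, hsu⟩) ?_⟩
  rintro s ⟨m', hm', hsu⟩
  exact main m' hm' ▸ hsu

/-- If some stable matching assigns a university `u` a set `T` of students with
`|T| < L`, then every stable matching assigns `u` exactly the set `T`, and hence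
`T = S(u)`, the set of stable partners of `u`. -/
theorem assigned_eq_of_underfilled
    {S U : Type*} [Fintype S] [Fintype U]
    (L : ℕ) (hL : 1 ≤ L)
    (sPref : S → Option U → Option U → Prop) (uPref : U → Option S → Option S → Prop)
    (hs : ∀ s, IsStrictTotalOrder (Option U) (sPref s))
    (hu : ∀ u, IsStrictTotalOrder (Option S) (uPref u))
    (u : U) (m : S → Option U) (hm : IsStableMatching L sPref uPref m)
    (hcard : (assignedSet m u).ncard < L) :
    (∀ m' : S → Option U, IsStableMatching L sPref uPref m' →
        assignedSet m' u = assignedSet m u) ∧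
      assignedSet m u = stablePartners L sPref uPref u :=
  assigned_eq_of_underfilled_general L sPref uPref hs hu u m hm hcard
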